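/- Deviation bounds for the empirical eigenvalues: Let m ∈ ℕ and suppose X ∈ 𝒳^{4m}_η for some η ≥ 1, and let w_1 ≥ 2 and w_2 ≤ 1/2 be real numbers. Then there exists a constant C > 0, depending only on m, such that sup_{j≥1} P(λ̂_j/λ_j ≥ w_1) ≤ C·n^{-m}·η and sup_{j≥1} P(λ̂_j/λ_j < w_2) ≤ C·n^{-m}·η, where λ̂_j := n^{-1} Σ_{i=1}^n ⟨X_i,ψ_j⟩² for an i.i.d. sample X_1,…,X_n of X. -/

import Mathlib

open MeasureTheory ProbabilityTheory Filter
open scoped ENNReal NNReal RealInnerProductSpace BigOperators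

noncomputable section

variable {H : Type*} [NormedAddCommGroup H] [InnerProductSpace ℝ H]

/-- The squared weighted norm `‖f‖²_w = ∑_j w_j ⟨f, ψ_j⟩²`, valued in `ℝ≥0∞`. -/
def wNormSq (ψ : ℕ → H) (w : ℕ → ℝ) (f : H) : ℝ≥0∞ :=
  ∑' j, ENNReal.ofReal (w j * ⟪f, ψ j⟫ ^ 2)

/-- The ellipsoid `F^ρ_w = {f : ‖f‖²_w ≤ ρ}`. -/
def ellipsoid (ψ : ℕ → H) (w : ℕ → ℝ) (ρ : ℝ) : Set H :=
  {f | wNormSq ψ w f ≤ ENNReal.ofReal ρ}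

/-- The empirical coefficients `ĝ_j = n⁻¹ ∑ᵢ Yᵢ⟨Xᵢ, ψ_j⟩`. -/
def estG (ψ : ℕ → H) {n : ℕ} (Ys : Fin n → ℝ) (Xs : Fin n → H) (j : ℕ) : ℝ :=
  (n : ℝ)⁻¹ * ∑ i, Ys i * ⟪Xs i, ψ j⟫

/-- The empirical eigenvalues `λ̂_j = n⁻¹ ∑ᵢ ⟨Xᵢ, ψ_j⟩²`. -/
def estLam (ψ : ℕ → H) {n : ℕ} (Xs : Fin n → H) (j : ℕ) : ℝ :=
  (n : ℝ)⁻¹ * ∑ i, ⟪Xs i, ψ j⟫ ^ 2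

/-- The thresholded orthogonal series estimator
`β̂ = ∑_{j=1}^m (ĝ_j/λ̂_j)·1{λ̂_j ≥ α}·ψ_j` (indices shifted to start at `0`). -/
def estBeta (ψ : ℕ → H) {n : ℕ} (m : ℕ) (α : ℝ) (Ys : Fin n → ℝ) (Xs : Fin n → H) : H :=
  ∑ j ∈ Finset.range m,
    (if α ≤ estLam ψ Xs j then estG ψ Ys Xs j / estLam ψ Xs j else 0) • ψ j

/-- The truncated target `β̃_m = ∑_{j=1}^m ⟨β,ψ_j⟩·1{λ̂_j ≥ α}·ψ_j`. -/
def truncBeta (ψ : ℕ → H) (β : H) {n : ℕ} (m : ℕ) (α : ℝ) (Xs : Fin n → H) : H :=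
  ∑ j ∈ Finset.range m, (if α ≤ estLam ψ Xs j then ⟪β, ψ j⟫ else 0) • ψ j

/-- Sobolev weights `w^p` for the periodic Sobolev ellipsoid: index `j : ℕ` corresponds to
the paper's index `j+1`, so `w^p_1 = 1`, `w^p_{2k} = w^p_{2k+1} = k^{2p}`. -/
def sobW (p : ℝ) (j : ℕ) : ℝ := if j = 0 then 1 else (((j + 1) / 2 : ℕ) : ℝ) ^ (2 * p)

/-- Polynomially decaying weights: `υ_1 = 1`, `υ_j = j^{-2a}` for `j ≥ 2`
(index `j : ℕ` corresponds to the paper's index `j+1`). -/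
def polyW (a : ℝ) (j : ℕ) : ℝ := if j = 0 then 1 else ((j + 1 : ℕ) : ℝ) ^ (-(2 * a))

/-- Exponentially decaying weights: `υ_1 = 1`, `υ_j = exp(-j^{2a})` for `j ≥ 2`
(index `j : ℕ` corresponds to the paper's index `j+1`). -/
def expW (a : ℝ) (j : ℕ) : ℝ :=
  if j = 0 then 1 else Real.exp (-(((j + 1 : ℕ) : ℝ) ^ (2 * a)))

/-- The link condition `(λ_j) ∈ S^d_υ`. -/
def linkCond (Λ υ : ℕ → ℝ) (d : ℝ) : Prop :=
  ∀ j, 1 / d ≤ Λ j / υ j ∧ Λ j / υ j ≤ d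

end

/-!
Put `Zᵢ = ⟨Xᵢ, ψ_j⟩ / √λ_j` and `Yᵢ = Zᵢ² - 1`. The `Yᵢ` are independent and centred with
`E|Yᵢ|^(2m) = O(η)`, and `λ̂_j / λ_j - 1 = n⁻¹ ∑ Yᵢ`, so both events force `|∑ Yᵢ| ≥ n / 2` and
Markov's inequality for the `2m`-th power reduces the claim to `E (∑ Yᵢ)^(2m) = O(n^m η)`.
Expanding the power, independence and centring kill every term in which some index occurs exactly
once; each surviving term is at most `max E|Yᵢ|^(2m)` by Lyapunov's inequality, and only
`O(n^m)` terms survive because they involve at most `m` distinct indices.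
-/

open Finset

section Moments

variable {α E : Type*} {mα : MeasurableSpace α} {μ : Measure α} [NormedAddCommGroup E]

lemma eLpNorm_natCast_pow_eq_lintegral {f : α → E} {N : ℕ} (hN : N ≠ 0) :
    eLpNorm f N μ ^ N = ∫⁻ a, ‖f a‖ₑ ^ N ∂μ := by
  have := eLpNorm_nnreal_pow_eq_lintegral (μ := μ) (f := f) (p := (N : ℝ≥0)) (by exact_mod_cast hN)
  simpa only [ENNReal.coe_natCast, NNReal.coe_natCast, ENNReal.rpow_natCast] using this

lemma measure_le_abs_le_lintegral_enorm_pow_div {f : α → ℝ} (hf : AEMeasurable f μ) {a : ℝ} (ha : 0 < a)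
    (N : ℕ) : μ {x | a ≤ |f x|} ≤ (∫⁻ x, ‖f x‖ₑ ^ N ∂μ) / ENNReal.ofReal a ^ N := by
  refine (measure_mono fun x (hx : a ≤ |f x|) => ?_).trans
    (meas_ge_le_lintegral_div (hf.enorm.pow_const N) (by simp [ha]) (by simp))
  rw [Set.mem_ofPred_eq, Real.enorm_eq_ofReal_abs]
  exact pow_le_pow_left' (ENNReal.ofReal_le_ofReal hx) N

variable [IsProbabilityMeasure μ]

lemma lintegral_enorm_pow_le_eLpNorm_pow {f : α → E} (hf : AEStronglyMeasurable f μ)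
    {c N : ℕ} (hcN : c ≤ N) : ∫⁻ a, ‖f a‖ₑ ^ c ∂μ ≤ eLpNorm f N μ ^ c := by
  obtain rfl | hc := eq_or_ne c 0
  · simp
  rw [← eLpNorm_natCast_pow_eq_lintegral hc]
  gcongr
  exact eLpNorm_le_eLpNorm_of_exponent_le (by exact_mod_cast hcN) hf

/-- Lyapunov's inequality applied factor by factor; the exponents `c i / N` add up to one. -/
lemma prod_lintegral_enorm_pow_le {ι : Type*} [Fintype ι] [Nonempty ι] {Y : ι → α → E}
    (hY : ∀ i, AEStronglyMeasurable (Y i) μ) (c : ι → ℕ) {M : ℝ≥0∞}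
    (hM : ∀ i, ∫⁻ a, ‖Y i a‖ₑ ^ (∑ j, c j) ∂μ ≤ M) :
    ∏ i, ∫⁻ a, ‖Y i a‖ₑ ^ c i ∂μ ≤ M := by
  set N := ∑ j, c j
  obtain hN | hN := eq_or_ne N 0
  · have hc : ∀ i, c i = 0 := by simpa [N, Finset.sum_eq_zero_iff] using hN
    obtain ⟨i⟩ := ‹Nonempty ι›
    simpa [hc, hN] using hM i
  have hnorm : ∀ i, eLpNorm (Y i) N μ ≤ M ^ (N⁻¹ : ℝ) := fun i => by
    rw [← ENNReal.pow_rpow_inv_natCast hN (eLpNorm (Y i) N μ),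
      eLpNorm_natCast_pow_eq_lintegral hN]
    gcongr
    exact hM i
  calc ∏ i, ∫⁻ a, ‖Y i a‖ₑ ^ c i ∂μ ≤ ∏ i, (M ^ (N⁻¹ : ℝ)) ^ c i :=
        prod_le_prod' fun i _ =>
          (lintegral_enorm_pow_le_eLpNorm_pow (hY i) (single_le_sum (by simp) (mem_univ i))).trans
            (pow_le_pow_left' (hnorm i) _)
    _ = M := by rw [prod_pow_eq_pow_sum, ENNReal.rpow_inv_natCast_pow hN]

end Moments

lemma sum_pow_eq_sum_prod_pow_card_fiber {ι R : Type*} [Fintype ι] [DecidableEq ι]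
    [CommSemiring R] (y : ι → R) (N : ℕ) :
    (∑ i, y i) ^ N = ∑ p : Fin N → ι, ∏ i, y i ^ #{k | p k = i} := by
  rw [sum_pow', Fintype.piFinset_univ]
  refine sum_congr rfl fun p _ => ?_
  rw [← prod_fiberwise univ p]
  refine prod_congr rfl fun i _ => ?_
  rw [prod_congr rfl fun k hk => by rw [(mem_filter.mp hk).2], prod_const]

lemma two_mul_card_image_le_of_card_fiber_ne_one {α β : Type*} [DecidableEq β] (s : Finset α)
    (f : α → β) (hf : ∀ b, #{a ∈ s | f a = b} ≠ 1) : 2 * #(s.image f) ≤ #s := by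
  rw [card_eq_sum_card_image f s, mul_comm, ← smul_eq_mul, ← sum_const]
  refine sum_le_sum fun b hb => ?_
  obtain ⟨a, ha, rfl⟩ := mem_image.mp hb
  have : 0 < #{x ∈ s | f x = f a} := card_pos.mpr ⟨a, mem_filter.mpr ⟨ha, rfl⟩⟩
  have := hf (f a)
  omega

/-- A map `Fin (2q) → ι` without singleton fibres has at most `q` values; there are at most
`(q + 1) n^q` candidate images and at most `(q + 1)^(2q)` maps into each of them. -/
lemma card_filter_card_fiber_ne_one_le {ι : Type*} [Fintype ι] [DecidableEq ι] [Nonempty ι]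
    (q : ℕ) :
    #{p : Fin (2 * q) → ι | ∀ i, #{k | p k = i} ≠ 1} ≤
      (q + 1) ^ (2 * q + 1) * Fintype.card ι ^ q := by
  set n := Fintype.card ι
  have hsub : ({p : Fin (2 * q) → ι | ∀ i, #{k | p k = i} ≠ 1} : Finset _) ⊆
      (range (q + 1)).biUnion fun k =>
        (powersetCard k univ).biUnion fun t => Fintype.piFinset fun _ => t := by
    intro p hp
    have himage := two_mul_card_image_le_of_card_fiber_ne_one univ p (mem_filter.mp hp).2
    simp only [mem_biUnion, mem_range, mem_powersetCard, Fintype.mem_piFinset]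
    exact ⟨_, by simp at himage; omega, univ.image p, ⟨subset_univ _, rfl⟩,
      fun k => mem_image_of_mem p (mem_univ k)⟩
  refine (card_le_card hsub).trans ((card_biUnion_le_card_mul _ _ (n ^ q * (q + 1) ^ (2 * q))
    fun k hk => ?_).trans (le_of_eq (by simp; ring)))
  have hk : k ≤ q := Nat.lt_succ_iff.mp (mem_range.mp hk)
  refine (card_biUnion_le_card_mul _ _ ((q + 1) ^ (2 * q)) fun t ht => ?_).trans ?_
  · rw [Fintype.card_piFinset_const, (mem_powersetCard.mp ht).2]
    exact Nat.pow_le_pow_left (by omega) _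
  · rw [card_powersetCard, card_univ]
    gcongr
    exact (Nat.choose_le_pow n k).trans (Nat.pow_le_pow_right Fintype.card_pos hk)

namespace ProbabilityTheory

variable {Ω ι : Type*} {mΩ : MeasurableSpace Ω} {P : Measure Ω} [Fintype ι] {Y : ι → Ω → ℝ}

lemma iIndepFun.lintegral_enorm_prod_pow_le [Nonempty ι] (hindep : iIndepFun Y P)
    (hmeas : ∀ i, Measurable (Y i)) (c : ι → ℕ) {M : ℝ≥0∞}
    (hM : ∀ i, ∫⁻ ω, ‖Y i ω‖ₑ ^ (∑ j, c j) ∂P ≤ M) :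
    ∫⁻ ω, ‖∏ i, Y i ω ^ c i‖ₑ ∂P ≤ M := by
  have := hindep.isProbabilityMeasure
  have hnorm : ∀ ω, ‖∏ i, Y i ω ^ c i‖ₑ = ∏ i, ‖Y i ω‖ₑ ^ c i := fun ω => by
    simp [enorm_eq_nnnorm, nnnorm_prod]
  simp_rw [hnorm]
  rw [lintegral_prod_eq_prod_lintegral_of_indepFun univ (fun i ω => ‖Y i ω‖ₑ ^ c i)
    (hindep.comp _ fun i => measurable_enorm.pow_const (c i))
    fun i => (hmeas i).enorm.pow_const (c i)]
  exact prod_lintegral_enorm_pow_le (fun i => (hmeas i).aestronglyMeasurable) c hM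

lemma iIndepFun.integral_prod_pow_eq_zero (hindep : iIndepFun Y P)
    (hmeas : ∀ i, Measurable (Y i)) {c : ι → ℕ} {i : ι} (hi : c i = 1)
    (hcent : ∫ ω, Y i ω ∂P = 0) : ∫ ω, ∏ j, Y j ω ^ c j ∂P = 0 := by
  have := (hindep.comp (fun j x => x ^ c j) fun j => measurable_id.pow_const _
    ).integral_fun_prod_eq_prod_integral fun j => ((hmeas j).pow_const _).aestronglyMeasurable
  simp only [Function.comp_apply] at this
  rw [this]
  exact prod_eq_zero (mem_univ i) (by simpa [hi] using hcent)

theorem iIndepFun.lintegral_enorm_sum_pow_le [Nonempty ι] [DecidableEq ι]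
    (hindep : iIndepFun Y P) (hmeas : ∀ i, Measurable (Y i)) (hcent : ∀ i, ∫ ω, Y i ω ∂P = 0)
    (q : ℕ) {M : ℝ≥0∞} (hM_top : M ≠ ∞) (hM : ∀ i, ∫⁻ ω, ‖Y i ω‖ₑ ^ (2 * q) ∂P ≤ M) :
    ∫⁻ ω, ‖∑ i, Y i ω‖ₑ ^ (2 * q) ∂P ≤
      ((q + 1) ^ (2 * q + 1) * Fintype.card ι ^ q : ℕ) * M := by
  set G : (Fin (2 * q) → ι) → Ω → ℝ := fun p ω => ∏ i, Y i ω ^ #{k | p k = i}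
  have hG (p) : ∫⁻ ω, ‖G p ω‖ₑ ∂P ≤ M := by
    refine hindep.lintegral_enorm_prod_pow_le hmeas _ fun i => ?_
    rw [sum_card_fiberwise_eq_card_filter]
    simpa using hM i
  have hG_int (p) : Integrable (G p) P :=
    ⟨by fun_prop, (hG p).trans_lt hM_top.lt_top⟩
  have hexpand : (fun ω => (∑ i, Y i ω) ^ (2 * q)) = fun ω => ∑ p, G p ω :=
    funext fun ω => sum_pow_eq_sum_prod_pow_card_fiber _ _
  have hint : Integrable (fun ω => (∑ i, Y i ω) ^ (2 * q)) P := by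
    rw [hexpand]
    exact integrable_finsetSum _ fun p _ => hG_int p
  set V : Finset (Fin (2 * q) → ι) := {p | ∀ i, #{k | p k = i} ≠ 1}
  have hvanish : ∫ ω, (∑ i, Y i ω) ^ (2 * q) ∂P = ∑ p ∈ V, ∫ ω, G p ω ∂P := by
    rw [hexpand, integral_finsetSum _ fun p _ => hG_int p]
    refine (sum_subset (subset_univ V) fun p _ hp => ?_).symm
    obtain ⟨i, hi⟩ : ∃ i, #{k | p k = i} = 1 := by simpa [V] using hp
    exact hindep.integral_prod_pow_eq_zero hmeas hi (hcent i)
  calc ∫⁻ ω, ‖∑ i, Y i ω‖ₑ ^ (2 * q) ∂P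
      = ENNReal.ofReal (∫ ω, (∑ i, Y i ω) ^ (2 * q) ∂P) := by
        rw [ofReal_integral_eq_lintegral_ofReal hint
          (ae_of_all _ fun ω => (even_two_mul q).pow_nonneg _)]
        refine lintegral_congr fun ω => ?_
        rw [Real.enorm_eq_ofReal_abs, ← ENNReal.ofReal_pow (abs_nonneg _),
          (even_two_mul q).pow_abs]
    _ ≤ ∑ p ∈ V, ‖∫ ω, G p ω ∂P‖ₑ := by
        rw [hvanish]
        exact (Real.ofReal_le_enorm _).trans (enorm_sum_le _ _)
    _ ≤ ∑ _p ∈ V, M := sum_le_sum fun p _ => (enorm_integral_le_lintegral_enorm _).trans (hG p)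
    _ ≤ ((q + 1) ^ (2 * q + 1) * Fintype.card ι ^ q : ℕ) * M := by
        rw [sum_const, nsmul_eq_mul]
        gcongr
        exact_mod_cast card_filter_card_fiber_ne_one_le q

end ProbabilityTheory

lemma lintegral_enorm_sq_sub_one_pow_le {Ω : Type*} {mΩ : MeasurableSpace Ω} {P : Measure Ω}
    [IsProbabilityMeasure P] (Z : Ω → ℝ) (m : ℕ) :
    ∫⁻ ω, ‖Z ω ^ 2 - 1‖ₑ ^ (2 * m) ∂P ≤ 2 ^ (2 * m) * (∫⁻ ω, ‖Z ω‖ₑ ^ (4 * m) ∂P + 1) := by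
  have hpt (z : ℝ) : ‖z ^ 2 - 1‖ₑ ^ (2 * m) ≤ 2 ^ (2 * m) * (‖z‖ₑ ^ (4 * m) + 1) := by
    have h := ENNReal.add_rpow_le_two_rpow_mul_rpow_add_rpow (‖z‖ₑ ^ 2) 1
      (Nat.cast_nonneg (2 * m))
    simp only [ENNReal.rpow_natCast, one_pow, ← pow_mul] at h
    calc ‖z ^ 2 - 1‖ₑ ^ (2 * m) ≤ (‖z‖ₑ ^ 2 + 1) ^ (2 * m) := by
          gcongr
          exact enorm_sub_le.trans (by rw [enorm_pow, enorm_one])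
      _ ≤ 2 ^ (2 * m) * (‖z‖ₑ ^ (4 * m) + 1) := by
          rwa [show 2 * (2 * m) = 4 * m by ring] at h
  calc ∫⁻ ω, ‖Z ω ^ 2 - 1‖ₑ ^ (2 * m) ∂P
      ≤ ∫⁻ ω, 2 ^ (2 * m) * (‖Z ω‖ₑ ^ (4 * m) + 1) ∂P := lintegral_mono fun ω => hpt (Z ω)
    _ = 2 ^ (2 * m) * (∫⁻ ω, ‖Z ω‖ₑ ^ (4 * m) ∂P + 1) := by
        rw [lintegral_const_mul' _ _ (by simp), lintegral_add_right _ measurable_const,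
          lintegral_const, measure_univ, one_mul]

theorem measure_half_le_abs_mean_sq_sub_one_le {Ω ι : Type*} {mΩ : MeasurableSpace Ω}
    {P : Measure Ω} [IsProbabilityMeasure P] [Fintype ι] [Nonempty ι] {Z : ι → Ω → ℝ}
    (hmeas : ∀ i, Measurable (Z i)) (hindep : iIndepFun Z P)
    (hvar : ∀ i, ∫ ω, Z i ω ^ 2 ∂P = 1) {m : ℕ} {η : ℝ} (hη : 1 ≤ η)
    (hmom : ∀ i, ∫⁻ ω, ‖Z i ω‖ₑ ^ (4 * m) ∂P ≤ ENNReal.ofReal η) :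
    P {ω | 1 / 2 ≤ |(Fintype.card ι : ℝ)⁻¹ * ∑ i, Z i ω ^ 2 - 1|} ≤
      ENNReal.ofReal
        (2 * 16 ^ m * (m + 1) ^ (2 * m + 1) * ((Fintype.card ι : ℝ) ^ m)⁻¹ * η) := by
  classical
  set n := Fintype.card ι
  have hn : (0 : ℝ) < n := Nat.cast_pos.mpr Fintype.card_pos
  set Y : ι → Ω → ℝ := fun i ω => Z i ω ^ 2 - 1
  have hYmeas (i) : Measurable (Y i) := ((hmeas i).pow_const 2).sub_const 1
  have hYcent (i) : ∫ ω, Y i ω ∂P = 0 := by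
    have hint : Integrable (fun ω => Z i ω ^ 2) P := .of_integral_ne_zero (by simp [hvar i])
    simp [Y, integral_sub hint (integrable_const 1), hvar i]
  have hYmom (i) : ∫⁻ ω, ‖Y i ω‖ₑ ^ (2 * m) ∂P ≤ ENNReal.ofReal (4 ^ m * (η + 1)) := by
    refine (lintegral_enorm_sq_sub_one_pow_le (Z i) m).trans ?_
    rw [ENNReal.ofReal_mul (by positivity), ENNReal.ofReal_add (by linarith) zero_le_one,
      ENNReal.ofReal_one, ENNReal.ofReal_pow zero_le_four, pow_mul]
    gcongr
    · norm_num
    · exact hmom i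
  have hsum := (hindep.comp (fun _ z => z ^ 2 - 1) fun _ => (measurable_id.pow_const 2).sub_const 1
    ).lintegral_enorm_sum_pow_le hYmeas hYcent m ENNReal.ofReal_ne_top hYmom
  have hevent : {ω | 1 / 2 ≤ |(n : ℝ)⁻¹ * ∑ i, Z i ω ^ 2 - 1|} ⊆ {ω | n / 2 ≤ |∑ i, Y i ω|} := by
    intro ω hω
    rw [Set.mem_ofPred_eq] at hω ⊢
    have hmean : (n : ℝ)⁻¹ * ∑ i, Z i ω ^ 2 - 1 = (∑ i, Y i ω) / n := by
      field_simp
      simp [Y, sum_sub_distrib, n]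
    rw [hmean, abs_div, abs_of_pos hn, le_div_iff₀ hn] at hω
    linarith
  calc P {ω | 1 / 2 ≤ |(n : ℝ)⁻¹ * ∑ i, Z i ω ^ 2 - 1|}
      ≤ (∫⁻ ω, ‖∑ i, Y i ω‖ₑ ^ (2 * m) ∂P) / ENNReal.ofReal (n / 2) ^ (2 * m) :=
        (measure_mono hevent).trans (measure_le_abs_le_lintegral_enorm_pow_div
          (Finset.measurable_sum _ fun i _ => hYmeas i).aemeasurable (by positivity) _)
    _ ≤ ENNReal.ofReal ((m + 1) ^ (2 * m + 1) * n ^ m * (4 ^ m * (η + 1))) /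
          ENNReal.ofReal ((n / 2) ^ (2 * m)) := by
        rw [ENNReal.ofReal_pow (by positivity), ENNReal.ofReal_mul (by positivity)]
        exact_mod_cast ENNReal.div_le_div_right hsum _
    _ = ENNReal.ofReal ((m + 1) ^ (2 * m + 1) * n ^ m * (4 ^ m * (η + 1)) / (n / 2) ^ (2 * m)) :=
        (ENNReal.ofReal_div_of_pos (by positivity)).symm
    _ ≤ ENNReal.ofReal (2 * 16 ^ m * (m + 1) ^ (2 * m + 1) * ((n : ℝ) ^ m)⁻¹ * η) := by
        gcongr
        calc (m + 1) ^ (2 * m + 1) * n ^ m * (4 ^ m * (η + 1)) / (n / 2) ^ (2 * m)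
            = 16 ^ m * (m + 1) ^ (2 * m + 1) * ((n : ℝ) ^ m)⁻¹ * (η + 1) := by
              rw [div_pow, pow_mul (2 : ℝ), show (16 : ℝ) = 2 ^ 2 * 4 by norm_num, mul_pow]
              field_simp
              ring
          _ ≤ 16 ^ m * (m + 1) ^ (2 * m + 1) * ((n : ℝ) ^ m)⁻¹ * (2 * η) := by
              gcongr
              linarith
          _ = _ := by ring

lemma estLam_div_eq_mean_sq {H : Type*} [NormedAddCommGroup H] [InnerProductSpace ℝ H]
    (ψ : ℕ → H) {n : ℕ} (xs : Fin n → H) (j : ℕ) {c : ℝ} (hc : 0 ≤ c) :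
    estLam ψ xs j / c = (n : ℝ)⁻¹ * ∑ i, (⟪xs i, ψ j⟫ / √c) ^ 2 := by
  simp only [estLam, div_pow, Real.sq_sqrt hc, ← sum_div, mul_div_assoc]

/-- Deviation bounds for the empirical eigenvalues.  For every `m` there is a
constant `C > 0` depending only on `m` such that for every second-order stationary
`X ∈ 𝒳^{4m}_η`, i.i.d. sample `X_1, …, X_n`, and reals `w₁ ≥ 2`, `w₂ ≤ 1/2`,
`sup_j P(λ̂_j/λ_j ≥ w₁) ≤ C n^{-m} η` and `sup_j P(λ̂_j/λ_j < w₂) ≤ C n^{-m} η`. -/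
theorem stmt13 (m : ℕ) :
    ∃ C : ℝ, 0 < C ∧
      ∀ (H : Type*) [NormedAddCommGroup H] [InnerProductSpace ℝ H] [CompleteSpace H]
        [MeasurableSpace H] [BorelSpace H]
        (Ω : Type*) [MeasurableSpace Ω] (P : Measure Ω) [IsProbabilityMeasure P]
        (ψ : ℕ → H) (_hψ : Orthonormal ℝ ψ)
        (n : ℕ) (_hn : 0 < n) (X : Fin n → Ω → H)
        (_hXmeas : ∀ i, Measurable (X i))
        -- i.i.d. sample
        (_hindep : iIndepFun X P)
        (_hident : ∀ i i', IdentDistrib (X i) (X i') P P)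
        -- centered, with finite second moment
        (_hXcent : ∀ i, ∫ ω, X i ω ∂P = 0)
        (_hX2 : ∀ i, MemLp (X i) 2 P)
        -- second-order stationarity: uncorrelated coefficients with variances Λ j > 0
        (Λ : ℕ → ℝ) (_hΛpos : ∀ j, 0 < Λ j)
        (_hstat : ∀ i j k,
          ∫ ω, ⟪X i ω, ψ j⟫ * ⟪X i ω, ψ k⟫ ∂P = if j = k then Λ j else 0)
        -- moment class `X ∈ 𝒳^{4m}_η`
        (η : ℝ) (_hη : 1 ≤ η)
        (_hmom : ∀ (i : Fin n) (j : ℕ),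
          ∫⁻ ω, (‖⟪X i ω, ψ j⟫ / Real.sqrt (Λ j)‖₊ : ℝ≥0∞) ^ (4 * m) ∂P ≤
            ENNReal.ofReal η)
        (w₁ w₂ : ℝ) (_hw₁ : 2 ≤ w₁) (_hw₂ : w₂ ≤ 1 / 2),
        ∀ j : ℕ,
          P {ω | w₁ ≤ estLam ψ (fun i => X i ω) j / Λ j} ≤
              ENNReal.ofReal (C * ((n : ℝ) ^ m)⁻¹ * η) ∧
            P {ω | estLam ψ (fun i => X i ω) j / Λ j < w₂} ≤
              ENNReal.ofReal (C * ((n : ℝ) ^ m)⁻¹ * η) := by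
  refine ⟨2 * 16 ^ m * (m + 1) ^ (2 * m + 1), by positivity, ?_⟩
  intro H _ _ _ _ _ Ω _ P _ ψ _ n hn X hXmeas hindep _ _ _ Λ hΛ hstat η hη hmom w₁ w₂ hw₁ hw₂ j
  have : Nonempty (Fin n) := ⟨⟨0, hn⟩⟩
  set Z : Fin n → Ω → ℝ := fun i ω => ⟪X i ω, ψ j⟫ / √(Λ j)
  have hcoeff : Measurable fun x : H => ⟪x, ψ j⟫ / √(Λ j) := by fun_prop
  have hvar (i) : ∫ ω, Z i ω ^ 2 ∂P = 1 :=
    calc ∫ ω, Z i ω ^ 2 ∂P = (∫ ω, ⟪X i ω, ψ j⟫ * ⟪X i ω, ψ j⟫ ∂P) / Λ j := by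
          rw [← integral_div]
          congr! 2 with ω
          rw [div_pow, Real.sq_sqrt (hΛ j).le, sq]
      _ = 1 := by rw [hstat, if_pos rfl, div_self (hΛ j).ne']
  have hdev := measure_half_le_abs_mean_sq_sub_one_le (Z := Z) (fun i => hcoeff.comp (hXmeas i))
    (hindep.comp _ fun _ => hcoeff) hvar hη fun i => hmom i j
  rw [Fintype.card_fin] at hdev
  have hratio (ω) : estLam ψ (fun i => X i ω) j / Λ j = (n : ℝ)⁻¹ * ∑ i, Z i ω ^ 2 :=
    estLam_div_eq_mean_sq ψ _ j (hΛ j).le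
  refine ⟨(measure_mono fun ω hω => ?_).trans hdev, (measure_mono fun ω hω => ?_).trans hdev⟩
  · simp only [Set.mem_ofPred_eq, hratio] at hω ⊢
    exact le_abs.mpr (Or.inl (by linarith))
  · simp only [Set.mem_ofPred_eq, hratio] at hω ⊢
    exact le_abs.mpr (Or.inr (by linarith))
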